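/- Let μ be a Borel probability measure on ℝ with ∫ y dμ = 0 and V = ∫ y² dμ < ∞, let γ ∈ (0,1) and δ = 1 − γ. Then for every natural number q ≥ 2 and every x ∈ ℝ, ∫∫ (z − δy)² K_1(y, dz) K_{q−1}(x, dy) = (δ^q − δ^{q+1}) x² + [(1 − δ^q) − δ²(1 − δ^{q−1})] V. That is, the conditional second moment of the innovation η_i = m̄_i − δ m̄_{i−1} given m̄_{i−q} = x equals (δ^q − δ^{q+1})x² + [(1−δ^q) − δ²(1−δ^{q−1})]E(m̄²); in particular its deviation from the unconditional value is (δ^q − δ^{q+1})(x² − V), which decays geometrically in q. -/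

import Mathlib

/-! Integrating against `K_h(x, ·)` averages `∫ f dμ` and `f x` with weights `1 - δ^h` and `δ^h`.
For the one-step kernel and `f z = (z - δy)²` this gives `γV + γδy²` (the mean of `μ` being zero),
and one more application of the same formula with `h = q - 1` to this quadratic in `y` yields the
claim, since `δ^{q-1}` times the weights `γ` and `γδ` gives `δ^{q-1} - δ^q` and `δ^q - δ^{q+1}`. -/

open MeasureTheory

/-- The `h`-step renewal kernel of one MSMD multiplier with renewal distribution `μ` and
switching probability `γ`: `K_h(x, ·) = (1 - (1-γ)^h)·μ + (1-γ)^h·δ_x`. -/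
noncomputable def renewalKernel (μ : Measure ℝ) (γ : ℝ) (h : ℕ) (x : ℝ) : Measure ℝ :=
  ENNReal.ofReal (1 - (1 - γ) ^ h) • μ + ENNReal.ofReal ((1 - γ) ^ h) • Measure.dirac x

theorem integral_renewalKernel {E : Type*} [NormedAddCommGroup E] [NormedSpace ℝ E]
    [CompleteSpace E] (μ : Measure ℝ) {γ : ℝ} (hγ : γ ∈ Set.Icc (0 : ℝ) 1) (h : ℕ)
    (x : ℝ) {f : ℝ → E} (hf : Integrable f μ) :
    ∫ y, f y ∂(renewalKernel μ γ h x) = (1 - (1 - γ) ^ h) • ∫ y, f y ∂μ + (1 - γ) ^ h • f x := by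
  have hδ_nonneg : 0 ≤ (1 - γ) ^ h := pow_nonneg (by linarith [hγ.2]) h
  have hδ_le_one : (1 - γ) ^ h ≤ 1 := pow_le_one₀ (by linarith [hγ.2]) (by linarith [hγ.1])
  rw [renewalKernel, integral_add_measure (hf.smul_measure ENNReal.ofReal_ne_top)
      ((integrable_dirac enorm_lt_top).smul_measure ENNReal.ofReal_ne_top),
    integral_smul_measure, integral_smul_measure, integral_dirac,
    ENNReal.toReal_ofReal (sub_nonneg.2 hδ_le_one), ENNReal.toReal_ofReal hδ_nonneg]

theorem integrable_sub_const_sq (μ : Measure ℝ) [IsFiniteMeasure μ]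
    (hmom : Integrable (fun y : ℝ => y ^ 2) μ) (c : ℝ) :
    Integrable (fun z : ℝ => (z - c) ^ 2) μ :=
  (memLp_two_iff_integrable_sq (by fun_prop)).1
    (((memLp_two_iff_integrable_sq aestronglyMeasurable_id).2 hmom).sub (memLp_const c))

theorem integral_sub_const_sq_of_integral_eq_zero (μ : Measure ℝ) [IsProbabilityMeasure μ]
    (hmean : ∫ y, y ∂μ = 0) (hmom : Integrable (fun y : ℝ => y ^ 2) μ) (c : ℝ) :
    ∫ z, (z - c) ^ 2 ∂μ = ∫ z, z ^ 2 ∂μ + c ^ 2 := by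
  have hint : Integrable (fun y : ℝ => y) μ :=
    ((memLp_two_iff_integrable_sq aestronglyMeasurable_id).2 hmom).integrable one_le_two
  have hlin : Integrable (fun z : ℝ => 2 * z * c) μ := (hint.const_mul 2).mul_const c
  simp_rw [sub_sq]
  rw [integral_add (f := fun z => z ^ 2 - 2 * z * c) (hmom.sub hlin) (integrable_const _),
    integral_sub hmom hlin, integral_mul_const, integral_const_mul, hmean]
  simp

theorem integral_innovation_sq_renewalKernel_one (μ : Measure ℝ) [IsProbabilityMeasure μ]
    (hmean : ∫ y, y ∂μ = 0) (hmom : Integrable (fun y : ℝ => y ^ 2) μ)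
    {γ : ℝ} (hγ : γ ∈ Set.Icc (0 : ℝ) 1) (y : ℝ) :
    ∫ z, (z - (1 - γ) * y) ^ 2 ∂(renewalKernel μ γ 1 y) =
      γ * ∫ z, z ^ 2 ∂μ + γ * (1 - γ) * y ^ 2 := by
  rw [integral_renewalKernel μ hγ 1 y (integrable_sub_const_sq μ hmom _),
    integral_sub_const_sq_of_integral_eq_zero μ hmean hmom, smul_eq_mul, smul_eq_mul]
  ring

/-- conditional second moment of the moving-average innovation
`η_i = m̄_i − δ m̄_{i−1}` of the centered multiplier chain given `m̄_{i−q} = x`: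
`∫∫ (z − δy)² K_1(y,dz) K_{q−1}(x,dy) = (δ^q − δ^{q+1})x² + ((1−δ^q) − δ²(1−δ^{q−1}))V`
for `q ≥ 2`, where `δ = 1 − γ`. -/
theorem innovation_conditional_second_moment
    (μ : Measure ℝ) [IsProbabilityMeasure μ]
    (hmean : ∫ y, y ∂μ = 0) (hmom : Integrable (fun y : ℝ => y ^ 2) μ)
    (V : ℝ) (hV : V = ∫ y, y ^ 2 ∂μ)
    (γ : ℝ) (hγ : γ ∈ Set.Ioo (0 : ℝ) 1) (δ : ℝ) (hδ : δ = 1 - γ)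
    (q : ℕ) (hq : 2 ≤ q) (x : ℝ) :
    ∫ y, (∫ z, (z - δ * y) ^ 2 ∂(renewalKernel μ γ 1 y)) ∂(renewalKernel μ γ (q - 1) x) =
      (δ ^ q - δ ^ (q + 1)) * x ^ 2 +
        ((1 - δ ^ q) - δ ^ 2 * (1 - δ ^ (q - 1))) * V := by
  have hγ' := Set.Ioo_subset_Icc_self hγ
  subst hδ
  simp_rw [integral_innovation_sq_renewalKernel_one μ hmean hmom hγ', ← hV]
  have hquad : Integrable (fun y : ℝ => γ * V + γ * (1 - γ) * y ^ 2) μ :=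
    (integrable_const _).add (hmom.const_mul _)
  rw [integral_renewalKernel μ hγ' (q - 1) x hquad,
    integral_add (integrable_const _) (hmom.const_mul _)]
  obtain ⟨p, rfl⟩ : ∃ p, q = p + 1 := ⟨q - 1, by omega⟩
  simp only [integral_const, integral_const_mul, probReal_univ, smul_eq_mul, one_mul, ← hV,
    Nat.add_sub_cancel]
  ring
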